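/- arXiv:1108.0132 — 2 statements merged into one kernel-verified Lean document; each statement's English description precedes it below -/
import Mathlib

section
/- Let N be an odd positive integer, let 0 ≤ n ≤ N be an integer, and let α, β be real parameters. For ε ≠ 0 set q = −e^ε, a = −e^{αε}, b = −e^{βε}, and define the dual q-Hahn recurrence coefficients A_n = (1 − q^{n−N})(1 − a q^{n+1}) and C_n = a q (1 − q^n)(b − q^{n−N−1}). Then, as ε → 0 (ε ≠ 0), A_n/(1+q) converges to 2(α+n+1) if n is even and to 2(n−N) if n is odd, while C_n/(1+q) converges to −2n if n is even and to 2(β+N+1−n) if n is odd. -/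
open Filter Topology

private lemma exp_zpow (x : ℝ) (k : ℤ) : (Real.exp x) ^ k = Real.exp (k * x) := by
  rcases k with m | m
  · rw [Int.ofNat_eq_coe, zpow_natCast, ← Real.exp_nat_mul]
    norm_num
  · rw [zpow_negSucc, ← Real.exp_nat_mul, ← Real.exp_neg]
    congr 1
    push_cast
    ring

private lemma neg_exp_zpow_odd {k : ℤ} (hk : Odd k) (ε : ℝ) :
    (-Real.exp ε) ^ k = -Real.exp ((k : ℝ) * ε) := by
  rw [hk.neg_zpow, exp_zpow]

private lemma neg_exp_zpow_even {k : ℤ} (hk : Even k) (ε : ℝ) :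
    (-Real.exp ε) ^ k = Real.exp ((k : ℝ) * ε) := by
  rw [hk.neg_zpow, exp_zpow]

private lemma slope_exp (c : ℝ) :
    Tendsto (fun ε : ℝ => (Real.exp (c * ε) - 1) / ε) (𝓝[≠] (0 : ℝ)) (𝓝 c) := by
  have h : HasDerivAt (fun ε : ℝ => Real.exp (c * ε)) c 0 := by
    simpa using (((hasDerivAt_id (0 : ℝ)).const_mul c).exp)
  have := hasDerivAt_iff_tendsto_slope.mp h
  simpa [slope_fun_def, Real.exp_zero, div_eq_inv_mul] using this

private lemma diff_lim (c d : ℝ) :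
    Tendsto (fun ε : ℝ => (Real.exp (c * ε) - Real.exp (d * ε)) / (1 - Real.exp ε))
      (𝓝[≠] (0 : ℝ)) (𝓝 (d - c)) := by
  have h1 := slope_exp 1
  have key : Tendsto (fun ε : ℝ =>
      ((Real.exp (c * ε) - 1) / ε - (Real.exp (d * ε) - 1) / ε) /
        (-((Real.exp (1 * ε) - 1) / ε))) (𝓝[≠] (0 : ℝ)) (𝓝 ((c - d) / (-1))) :=
    ((slope_exp c).sub (slope_exp d)).div h1.neg (by norm_num)
  have hval : (c - d) / (-1 : ℝ) = d - c := by ring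
  rw [hval] at key
  refine key.congr' ?_
  filter_upwards [self_mem_nhdsWithin] with ε hε
  have hε' : ε ≠ 0 := hε
  have hden : 1 - Real.exp ε ≠ 0 := by
    intro h
    exact hε' (Real.exp_injective (by rw [Real.exp_zero]; linarith))
  rw [one_mul]
  field_simp
  have hden2 : Real.exp ε - 1 ≠ 0 := fun h => hden (by linarith)
  rw [mul_div_assoc, show (1 - Real.exp ε) / (Real.exp ε - 1) = -1 by
    rw [div_eq_iff hden2]; ring]
  ring

private lemma tendsto_cont (f : ℝ → ℝ) (hf : Continuous f) :
    Tendsto f (𝓝[≠] (0 : ℝ)) (𝓝 (f 0)) :=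
  (hf.tendsto 0).mono_left nhdsWithin_le_nhds

/-- $q \to -1$ limit (odd $N$) of the dual $q$-Hahn recurrence
coefficients $A_n = (1-q^{n-N})(1-aq^{n+1})$ and $C_n = aq(1-q^n)(b-q^{n-N-1})$
with $q = -e^{\varepsilon}$, $a = -e^{\alpha\varepsilon}$, $b = -e^{\beta\varepsilon}$. -/
theorem dual_qHahn_coeff_limit_odd
    (N : ℕ) (hN : 0 < N) (hNodd : Odd N)
    (n : ℕ) (hn : n ≤ N) (α β : ℝ) :
    Tendsto (fun ε : ℝ =>
        ((1 - (-Real.exp ε) ^ ((n : ℤ) - (N : ℤ))) *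
          (1 - (-Real.exp (α * ε)) * (-Real.exp ε) ^ ((n : ℤ) + 1))) /
        (1 + (-Real.exp ε)))
      (𝓝[≠] (0 : ℝ))
      (𝓝 (if Even n then 2 * (α + (n : ℝ) + 1) else 2 * ((n : ℝ) - (N : ℝ))))
    ∧
    Tendsto (fun ε : ℝ =>
        ((-Real.exp (α * ε)) * (-Real.exp ε) * (1 - (-Real.exp ε) ^ (n : ℤ)) *
          ((-Real.exp (β * ε)) - (-Real.exp ε) ^ ((n : ℤ) - (N : ℤ) - 1))) /
        (1 + (-Real.exp ε)))
      (𝓝[≠] (0 : ℝ))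
      (𝓝 (if Even n then -2 * (n : ℝ) else 2 * (β + (N : ℝ) + 1 - (n : ℝ)))) := by
  obtain ⟨m, hm⟩ := hNodd
  have hmZ : (N : ℤ) = 2 * m + 1 := by exact_mod_cast hm
  by_cases hne : Even n
  · obtain ⟨k, hk⟩ := hne
    have hkZ : (n : ℤ) = k + k := by exact_mod_cast hk
    have h1 : Odd ((n : ℤ) - (N : ℤ)) := ⟨k - m - 1, by omega⟩
    have h2 : Odd ((n : ℤ) + 1) := ⟨k, by omega⟩
    have h3 : Even (n : ℤ) := ⟨k, by omega⟩
    have h4 : Even ((n : ℤ) - (N : ℤ) - 1) := ⟨k - m - 1, by omega⟩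
    constructor
    · have F : Tendsto (fun ε : ℝ => 1 + Real.exp ((((n : ℤ) - (N : ℤ) : ℤ) : ℝ) * ε))
          (𝓝[≠] (0 : ℝ)) (𝓝 2) := by
        have := tendsto_cont (fun ε : ℝ => 1 + Real.exp ((((n : ℤ) - (N : ℤ) : ℤ) : ℝ) * ε))
          (by continuity)
        norm_num at this
        convert this using 2
        try norm_num
      have G := diff_lim 0 (α + (((n : ℤ) + 1 : ℤ) : ℝ))
      have L := F.mul G
      rw [if_pos ⟨k, hk⟩]
      have hval : 2 * (α + (n : ℝ) + 1) = 2 * ((α + (((n : ℤ) + 1 : ℤ) : ℝ)) - 0) := by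
        push_cast; ring
      rw [hval]
      refine L.congr fun ε => ?_
      rw [neg_exp_zpow_odd h1, neg_exp_zpow_odd h2,
        show (α + (((n : ℤ) + 1 : ℤ) : ℝ)) * ε = α * ε + (((n : ℤ) + 1 : ℤ) : ℝ) * ε by ring,
        Real.exp_add, zero_mul, Real.exp_zero]
      ring
    · have F : Tendsto (fun ε : ℝ => Real.exp (α * ε) * Real.exp ε *
          (-(Real.exp (β * ε)) - Real.exp ((((n : ℤ) - (N : ℤ) - 1 : ℤ) : ℝ) * ε)))
          (𝓝[≠] (0 : ℝ)) (𝓝 (-2)) := by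
        have := tendsto_cont (fun ε : ℝ => Real.exp (α * ε) * Real.exp ε *
          (-(Real.exp (β * ε)) - Real.exp ((((n : ℤ) - (N : ℤ) - 1 : ℤ) : ℝ) * ε)))
          (by continuity)
        norm_num at this
        convert this using 2
        try norm_num
      have G := diff_lim 0 (((n : ℤ) : ℝ))
      have L := F.mul G
      rw [if_pos ⟨k, hk⟩]
      have hval : -2 * (n : ℝ) = -2 * ((((n : ℤ) : ℝ)) - 0) := by push_cast; ring
      rw [hval]
      refine L.congr fun ε => ?_
      rw [neg_exp_zpow_even h3, neg_exp_zpow_even h4, zero_mul, Real.exp_zero]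
      ring
  · rw [Nat.not_even_iff_odd] at hne
    obtain ⟨k, hk⟩ := hne
    have hkZ : (n : ℤ) = 2 * k + 1 := by exact_mod_cast hk
    have h1 : Even ((n : ℤ) - (N : ℤ)) := ⟨k - m, by omega⟩
    have h2 : Even ((n : ℤ) + 1) := ⟨k + 1, by omega⟩
    have h3 : Odd (n : ℤ) := ⟨k, by omega⟩
    have h4 : Odd ((n : ℤ) - (N : ℤ) - 1) := ⟨k - m - 1, by omega⟩
    have hifn : ¬ Even n := by simpa [Nat.not_even_iff_odd] using ⟨k, hk⟩
    constructor
    · have F : Tendsto (fun ε : ℝ => 1 + Real.exp (α * ε) *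
          Real.exp ((((n : ℤ) + 1 : ℤ) : ℝ) * ε)) (𝓝[≠] (0 : ℝ)) (𝓝 2) := by
        have := tendsto_cont (fun ε : ℝ => 1 + Real.exp (α * ε) *
          Real.exp ((((n : ℤ) + 1 : ℤ) : ℝ) * ε)) (by continuity)
        norm_num at this
        convert this using 2
        try norm_num
      have G := diff_lim 0 ((((n : ℤ) - (N : ℤ) : ℤ) : ℝ))
      have L := F.mul G
      rw [if_neg hifn]
      have hval : 2 * ((n : ℝ) - (N : ℝ)) = 2 * (((((n : ℤ) - (N : ℤ) : ℤ) : ℝ)) - 0) := by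
        push_cast; ring
      rw [hval]
      refine L.congr fun ε => ?_
      rw [neg_exp_zpow_even h1, neg_exp_zpow_even h2, zero_mul, Real.exp_zero]
      ring
    · have F : Tendsto (fun ε : ℝ => Real.exp (α * ε) * Real.exp ε *
          (1 + Real.exp (((n : ℤ) : ℝ) * ε))) (𝓝[≠] (0 : ℝ)) (𝓝 2) := by
        have := tendsto_cont (fun ε : ℝ => Real.exp (α * ε) * Real.exp ε *
          (1 + Real.exp (((n : ℤ) : ℝ) * ε))) (by continuity)
        norm_num at this
        convert this using 2
        try norm_num
      have G := diff_lim ((((n : ℤ) - (N : ℤ) - 1 : ℤ) : ℝ)) β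
      have L := F.mul G
      rw [if_neg hifn]
      have hval : 2 * (β + (N : ℝ) + 1 - (n : ℝ)) =
          2 * (β - ((((n : ℤ) - (N : ℤ) - 1 : ℤ) : ℝ))) := by push_cast; ring
      rw [hval]
      refine L.congr fun ε => ?_
      rw [neg_exp_zpow_odd h3, neg_exp_zpow_odd h4]
      ring
end

section
/- Let N be an odd positive integer and α > −1, β > −1. Let R_n be the monic dual −1 Hahn polynomials (odd N case) and set η = (α+β+2)/4. Then for every integer n with 0 ≤ 2n ≤ N the polynomial identity R_{2n}(x−1) = 16^n ((1−N)/2)_n ((α+1)/2)_n · Σ_{k=0}^{n} [(−n)_k (η + x/4)_k (η − x/4)_k] / [(−(N−1)/2)_k ((α+1)/2)_k k!] holds, and for every integer n with 0 ≤ 2n+1 ≤ N the identity R_{2n+1}(x−1) = 16^n ((1−N)/2)_n ((α+3)/2)_n (x + α − β) · Σ_{k=0}^{n} [(−n)_k (η + x/4)_k (η − x/4)_k] / [(−(N−1)/2)_k ((α+3)/2)_k k!] holds. -/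
/-- The Pochhammer symbol $(a)_k = a(a+1)\cdots(a+k-1)$, $(a)_0 = 1$. -/
noncomputable def poch (a : ℝ) (k : ℕ) : ℝ := (ascPochhammer ℝ k).eval a

lemma poch_zero (a : ℝ) : poch a 0 = 1 := by simp [poch]

lemma poch_succ (a : ℝ) (k : ℕ) : poch a (k+1) = poch a k * (a + k) := by
  simp [poch, ascPochhammer_succ_right]

lemma poch_succ_left (a : ℝ) (k : ℕ) : poch a (k+1) = a * poch (a+1) k := by
  simp [poch, ascPochhammer_succ_left, Polynomial.eval_comp]

lemma poch_pos {a : ℝ} (ha : 0 < a) (k : ℕ) : 0 < poch a k := by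
  induction k with
  | zero => simp [poch_zero]
  | succ k ih => rw [poch_succ]; positivity

lemma poch_negM_ne {M k : ℕ} (h : k ≤ M) : poch (-(M:ℝ)) k ≠ 0 := by
  induction k with
  | zero => simp [poch_zero]
  | succ k ih =>
    rw [poch_succ]
    refine mul_ne_zero (ih (by omega)) ?_
    have : (k:ℝ) < (M:ℝ) := by exact_mod_cast (by omega : k < M)
    intro hc; linarith

lemma key1 (n k : ℕ) : ((n:ℝ)+1-k) * poch (-((n:ℝ)+1)) k = ((n:ℝ)+1) * poch (-(n:ℝ)) k := by
  induction k with
  | zero => simp [poch_zero]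
  | succ k ih =>
    rw [poch_succ, poch_succ]
    push_cast
    linear_combination ((k:ℝ) - n) * ih

lemma poch_neg_self (n : ℕ) : poch (-(n:ℝ)) (n+1) = 0 := by
  have h := key1 n (n+1)
  push_cast at h
  have h2 : ((n:ℝ)+1-(n+1)) = 0 := by ring
  rw [h2, zero_mul] at h
  have hne : ((n:ℝ)+1) ≠ 0 := by positivity
  rcases mul_eq_zero.mp h.symm with h'|h'
  · exact absurd h' hne
  · exact h'

lemma sumB (M n : ℕ) (hn : n + 1 ≤ M) (A y z : ℝ) (hA : 0 < A) :
    (A + (n:ℝ) + 1) * ∑ k ∈ Finset.range (n+2),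
        poch (-((n:ℝ)+1)) k * poch y k * poch z k /
          (poch (-(M:ℝ)) k * poch (A+1) k * (Nat.factorial k : ℝ))
    = A * (∑ k ∈ Finset.range (n+2),
        poch (-((n:ℝ)+1)) k * poch y k * poch z k /
          (poch (-(M:ℝ)) k * poch A k * (Nat.factorial k : ℝ)))
    + ((n:ℝ)+1) * ∑ k ∈ Finset.range (n+1),
        poch (-(n:ℝ)) k * poch y k * poch z k /
          (poch (-(M:ℝ)) k * poch (A+1) k * (Nat.factorial k : ℝ)) := by
  have hext : ∑ k ∈ Finset.range (n+1),
        poch (-(n:ℝ)) k * poch y k * poch z k /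
          (poch (-(M:ℝ)) k * poch (A+1) k * (Nat.factorial k : ℝ))
      = ∑ k ∈ Finset.range (n+2),
        poch (-(n:ℝ)) k * poch y k * poch z k /
          (poch (-(M:ℝ)) k * poch (A+1) k * (Nat.factorial k : ℝ)) := by
    rw [Finset.sum_range_succ (n := n+1), poch_neg_self]
    simp
  rw [hext, Finset.mul_sum, Finset.mul_sum, Finset.mul_sum, ← Finset.sum_add_distrib]
  refine Finset.sum_congr rfl ?_
  intro k hk
  have hkM : k ≤ M := by
    simp only [Finset.mem_range] at hk; omega
  have hm : poch (-(M:ℝ)) k ≠ 0 := poch_negM_ne hkM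
  have hq : poch A k ≠ 0 := ne_of_gt (poch_pos hA k)
  have hq1 : poch (A+1) k ≠ 0 := ne_of_gt (poch_pos (by linarith) k)
  have hf : (Nat.factorial k : ℝ) ≠ 0 := Nat.cast_ne_zero.mpr (Nat.factorial_ne_zero k)
  have hrel : A * poch (A+1) k = poch A k * (A + k) := by
    rw [← poch_succ_left, poch_succ]
  have hkey := key1 n k
  rw [show -((n:ℝ)+1) = -1-(n:ℝ) from by ring] at hkey ⊢
  field_simp
  linear_combination (poch y k * poch z k * poch A k) * hkey - (poch (-1-(n:ℝ)) k * poch y k * poch z k) * hrel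

lemma sumA (M n : ℕ) (hn : n + 1 ≤ M) (A B y z : ℝ) (hA : 0 < A) (hyz : y + z = A + B) :
    ((n:ℝ) - M) * A * ∑ k ∈ Finset.range (n+2),
        poch (-((n:ℝ)+1)) k * poch y k * poch z k /
          (poch (-(M:ℝ)) k * poch A k * (Nat.factorial k : ℝ))
    = (A*B - y*z) * (∑ k ∈ Finset.range (n+1),
        poch (-(n:ℝ)) k * poch y k * poch z k /
          (poch (-(M:ℝ)) k * poch (A+1) k * (Nat.factorial k : ℝ)))
    - A*(B + (M:ℝ) - (n:ℝ)) * ∑ k ∈ Finset.range (n+1),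
        poch (-(n:ℝ)) k * poch y k * poch z k /
          (poch (-(M:ℝ)) k * poch A k * (Nat.factorial k : ℝ)) := by
  set W : ℕ → ℝ := fun k =>
    (A+(k:ℝ))*(B+(k:ℝ)) * (poch (-(n:ℝ)) k * poch y k * poch z k /
        (poch (-(M:ℝ)) k * poch (A+1) k * (Nat.factorial k : ℝ)))
    - A*(B + (M:ℝ) - (n:ℝ)) * (poch (-(n:ℝ)) k * poch y k * poch z k /
        (poch (-(M:ℝ)) k * poch A k * (Nat.factorial k : ℝ))) with hW
  set G2 : ℕ → ℝ := fun k =>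
    poch (-(n:ℝ)) k * poch y (k+1) * poch z (k+1) /
        (poch (-(M:ℝ)) k * poch (A+1) k * (Nat.factorial k : ℝ)) with hG2
  have hRHS : (A*B - y*z) * (∑ k ∈ Finset.range (n+1),
        poch (-(n:ℝ)) k * poch y k * poch z k /
          (poch (-(M:ℝ)) k * poch (A+1) k * (Nat.factorial k : ℝ)))
    - A*(B + (M:ℝ) - (n:ℝ)) * (∑ k ∈ Finset.range (n+1),
        poch (-(n:ℝ)) k * poch y k * poch z k /
          (poch (-(M:ℝ)) k * poch A k * (Nat.factorial k : ℝ)))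
    = ∑ k ∈ Finset.range (n+1), (W k - G2 k) := by
    rw [Finset.mul_sum, Finset.mul_sum, ← Finset.sum_sub_distrib]
    refine Finset.sum_congr rfl ?_
    intro k _
    simp only [hW, hG2]
    rw [poch_succ y, poch_succ z]
    have hab : A*B - y*z = (A+(k:ℝ))*(B+(k:ℝ)) - (y+(k:ℝ))*(z+(k:ℝ)) := by
      linear_combination (k:ℝ) * hyz
    rw [hab]
    ring
  rw [hRHS]
  have hterm : ∀ k ∈ Finset.range (n+1),
      ((n:ℝ) - M) * A * (poch (-((n:ℝ)+1)) (k+1) * poch y (k+1) * poch z (k+1) /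
          (poch (-(M:ℝ)) (k+1) * poch A (k+1) * (Nat.factorial (k+1) : ℝ)))
        + G2 k = W (k+1) := by
    intro k hk
    have hkM : k + 1 ≤ M := by simp only [Finset.mem_range] at hk; omega
    have hm : poch (-(M:ℝ)) k ≠ 0 := poch_negM_ne (by omega)
    have hq : poch A k ≠ 0 := ne_of_gt (poch_pos hA k)
    have hq1 : poch (A+1) k ≠ 0 := ne_of_gt (poch_pos (by linarith) k)
    have hf : (Nat.factorial k : ℝ) ≠ 0 := Nat.cast_ne_zero.mpr (Nat.factorial_ne_zero k)
    have hkMne : (-(M:ℝ) + (k:ℝ)) ≠ 0 := by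
      have : (k:ℝ) < (M:ℝ) := by exact_mod_cast (by omega : k < M)
      intro hc; linarith
    have hAk : A + (k:ℝ) ≠ 0 := by positivity
    have hA1k : A + 1 + (k:ℝ) ≠ 0 := by positivity
    simp only [hW, hG2]
    have e1 : poch (-((n:ℝ)+1)) (k+1) = (-((n:ℝ)+1)) * poch (-(n:ℝ)) k := by
      rw [poch_succ_left]; norm_num
    have e2 : poch (-(M:ℝ)) (k+1) = poch (-(M:ℝ)) k * (-(M:ℝ) + (k:ℝ)) := poch_succ _ k
    have e3 : poch A (k+1) = poch A k * (A + (k:ℝ)) := poch_succ _ k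
    have e4 : poch (-(n:ℝ)) (k+1) = poch (-(n:ℝ)) k * (-(n:ℝ) + (k:ℝ)) := poch_succ _ k
    have e5 : poch (A+1) (k+1) = poch (A+1) k * (A + 1 + (k:ℝ)) := poch_succ _ k
    have e6 : (Nat.factorial (k+1) : ℝ) = ((k:ℝ)+1) * (Nat.factorial k : ℝ) := by
      rw [Nat.factorial_succ]; push_cast; ring
    have hq1' : poch (A+1) k = poch A k * (A + (k:ℝ)) / A := by
      rw [← poch_succ, poch_succ_left]; field_simp
    rw [e1, e2, e3, e4, e5, e6, hq1']
    push_cast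
    field_simp
    ring
  have hW0 : W 0 = ((n:ℝ) - M) * A := by
    simp only [hW, poch_zero]
    norm_num
    ring
  have hWlast : W (n+1) = 0 := by
    simp only [hW, poch_neg_self]
    norm_num
  rw [Finset.sum_sub_distrib]
  have hL : ∑ k ∈ Finset.range (n+2),
      ((n:ℝ) - M) * A * (poch (-((n:ℝ)+1)) k * poch y k * poch z k /
          (poch (-(M:ℝ)) k * poch A k * (Nat.factorial k : ℝ)))
      = ∑ k ∈ Finset.range (n+1), W k - ∑ k ∈ Finset.range (n+1), G2 k := by
    rw [Finset.sum_range_succ' _ (n+1)]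
    have hc : ∀ k ∈ Finset.range (n+1),
        ((n:ℝ) - M) * A * (poch (-((n:ℝ)+1)) (k+1) * poch y (k+1) * poch z (k+1) /
          (poch (-(M:ℝ)) (k+1) * poch A (k+1) * (Nat.factorial (k+1) : ℝ)))
        = W (k+1) - G2 k := by
      intro k hk
      have := hterm k hk
      linarith
    rw [Finset.sum_congr rfl hc, Finset.sum_sub_distrib]
    have h0 : ((n:ℝ) - M) * A * (poch (-((n:ℝ)+1)) 0 * poch y 0 * poch z 0 /
          (poch (-(M:ℝ)) 0 * poch A 0 * (Nat.factorial 0 : ℝ))) = W 0 := by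
      rw [hW0]; simp [poch_zero]
    rw [h0]
    have hshift : ∑ k ∈ Finset.range (n+1), W (k+1) + W 0 = ∑ k ∈ Finset.range (n+1), W k := by
      rw [← Finset.sum_range_succ' W (n+1), Finset.sum_range_succ, hWlast]
      ring
    linarith [hshift]
  rw [← hL, Finset.mul_sum]

/-- explicit ${}_3F_2$ hypergeometric expressions for the monic
dual $-1$ Hahn polynomials with odd positive $N$, $\alpha > -1$, $\beta > -1$,
where $\eta = (\alpha+\beta+2)/4$. -/
theorem dualMinusOneHahn_explicit_odd
    (N : ℕ) (hN : 0 < N) (hNodd : Odd N)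
    (α β : ℝ) (hα : -1 < α) (hβ : -1 < β)
    (u b : ℕ → ℝ)
    (hu : ∀ n : ℕ, u n =
      if Even n then 4 * (n : ℝ) * ((N : ℝ) + 1 - (n : ℝ))
      else 4 * (α + (n : ℝ)) * (β + (N : ℝ) + 1 - (n : ℝ)))
    (hb : ∀ n : ℕ, b n =
      if Even n then -1 - α + β
      else -1 + α - β)
    (R : ℕ → ℝ → ℝ)
    (hR0 : ∀ x : ℝ, R 0 x = 1)
    (hR1 : ∀ x : ℝ, R 1 x = x - b 0)
    (hRrec : ∀ (n : ℕ) (x : ℝ),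
      R (n + 2) x = (x - b (n + 1)) * R (n + 1) x - u (n + 1) * R n x)
    (η : ℝ) (hη : η = (α + β + 2) / 4) :
    (∀ n : ℕ, 2 * n ≤ N → ∀ x : ℝ,
      R (2 * n) (x - 1) =
        16 ^ n * poch ((1 - (N : ℝ)) / 2) n * poch ((α + 1) / 2) n *
          ∑ k ∈ Finset.range (n + 1),
            poch (-(n : ℝ)) k * poch (η + x / 4) k * poch (η - x / 4) k /
              (poch (-(((N : ℝ) - 1) / 2)) k * poch ((α + 1) / 2) k *
                (Nat.factorial k : ℝ))) ∧
    (∀ n : ℕ, 2 * n + 1 ≤ N → ∀ x : ℝ,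
      R (2 * n + 1) (x - 1) =
        16 ^ n * poch ((1 - (N : ℝ)) / 2) n * poch ((α + 3) / 2) n * (x + α - β) *
          ∑ k ∈ Finset.range (n + 1),
            poch (-(n : ℝ)) k * poch (η + x / 4) k * poch (η - x / 4) k /
              (poch (-(((N : ℝ) - 1) / 2)) k * poch ((α + 3) / 2) k *
                (Nat.factorial k : ℝ))) := by
  subst hη
  obtain ⟨M, hNM⟩ := hNodd
  have hNc : (N:ℝ) = 2*(M:ℝ)+1 := by rw [hNM]; push_cast; ring
  have e1 : (1 - (N:ℝ))/2 = -(M:ℝ) := by rw [hNc]; ring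
  have e2 : -(((N:ℝ)-1)/2) = -(M:ℝ) := by rw [hNc]; ring
  have e3 : (α+3)/2 = (α+1)/2 + 1 := by ring
  have hA : (0:ℝ) < (α+1)/2 := by linarith
  simp only [e1, e2, e3]
  have key : ∀ n : ℕ,
    (2*n ≤ N → ∀ x : ℝ, R (2*n) (x-1) =
        16 ^ n * poch (-(M:ℝ)) n * poch ((α + 1) / 2) n *
          ∑ k ∈ Finset.range (n + 1),
            poch (-(n : ℝ)) k * poch ((α+β+2)/4 + x / 4) k * poch ((α+β+2)/4 - x / 4) k /
              (poch (-(M:ℝ)) k * poch ((α + 1) / 2) k * (Nat.factorial k : ℝ))) ∧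
    (2*n+1 ≤ N → ∀ x : ℝ, R (2*n+1) (x-1) =
        16 ^ n * poch (-(M:ℝ)) n * poch ((α + 1) / 2 + 1) n * (x + α - β) *
          ∑ k ∈ Finset.range (n + 1),
            poch (-(n : ℝ)) k * poch ((α+β+2)/4 + x / 4) k * poch ((α+β+2)/4 - x / 4) k /
              (poch (-(M:ℝ)) k * poch ((α + 1) / 2 + 1) k * (Nat.factorial k : ℝ))) := by
    intro n
    induction n with
    | zero =>
      constructor
      · intro _ x
        have : R (2*0) (x-1) = 1 := hR0 (x-1)
        rw [this]
        simp [poch_zero, Finset.sum_range_one]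
      · intro _ x
        have : R (2*0+1) (x-1) = (x-1) - b 0 := hR1 (x-1)
        rw [this, hb 0, if_pos (Even.zero)]
        simp [poch_zero, Finset.sum_range_one]
        ring
    | succ n ih =>
      have hEs : 2*(n+1) ≤ N → ∀ x : ℝ, R (2*(n+1)) (x-1) =
          16 ^ (n+1) * poch (-(M:ℝ)) (n+1) * poch ((α + 1) / 2) (n+1) *
            ∑ k ∈ Finset.range (n + 1 + 1),
              poch (-((n+1 : ℕ) : ℝ)) k * poch ((α+β+2)/4 + x / 4) k * poch ((α+β+2)/4 - x / 4) k /
                (poch (-(M:ℝ)) k * poch ((α + 1) / 2) k * (Nat.factorial k : ℝ)) := by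
        intro h2 x
        have hn1M : n + 1 ≤ M := by omega
        have hO := ih.2 (by omega) x
        have hE := ih.1 (by omega) x
        have hbe : b (2*n+1) = -1+α-β := by
          rw [hb, if_neg (by rw [Nat.even_iff]; omega)]
        have hue : u (2*n+1) = 16*((α+1)/2+(n:ℝ))*((β+1)/2+(M:ℝ)-(n:ℝ)) := by
          rw [hu, if_neg (by rw [Nat.even_iff]; omega)]
          push_cast [hNc]
          ring
        have HA := sumA M n hn1M ((α+1)/2) ((β+1)/2) ((α+β+2)/4 + x/4) ((α+β+2)/4 - x/4)
          hA (by ring)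
        rw [show n+2 = n+1+1 from rfl] at HA
        have hpm : poch (-(M:ℝ)) (n+1) = poch (-(M:ℝ)) n * (-(M:ℝ) + (n:ℝ)) := poch_succ _ n
        have hpa : poch ((α+1)/2) (n+1) = (α+1)/2 * poch ((α+1)/2+1) n := poch_succ_left _ n
        have hreln : (α+1)/2 * poch ((α+1)/2+1) n = poch ((α+1)/2) n * ((α+1)/2 + (n:ℝ)) := by
          rw [← poch_succ_left, poch_succ]
        rw [show 2*(n+1) = 2*n+2 from by ring, hRrec (2*n) (x-1), hbe, hue, hO, hE,
          hpm, hpa]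
        push_cast
        linear_combination (-(16^(n+1) * poch (-(M:ℝ)) n * poch ((α+1)/2+1) n)) * HA
          + (16^(n+1) * ((β+1)/2+(M:ℝ)-(n:ℝ)) * poch (-(M:ℝ)) n *
              (∑ k ∈ Finset.range (n+1),
                poch (-(n : ℝ)) k * poch ((α+β+2)/4 + x / 4) k * poch ((α+β+2)/4 - x / 4) k /
                  (poch (-(M:ℝ)) k * poch ((α + 1) / 2) k * (Nat.factorial k : ℝ)))) * hreln
      refine ⟨hEs, ?_⟩
      intro h2 x
      have hn1M : n + 1 ≤ M := by omega
      have hE1 := hEs (by omega) x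
      have hO := ih.2 (by omega) x
      have hbe : b (2*n+2) = -1-α+β := by
        rw [hb, if_pos ⟨n+1, by ring⟩]
      have hue : u (2*n+2) = 16*((n:ℝ)+1)*((M:ℝ)-(n:ℝ)) := by
        rw [hu, if_pos ⟨n+1, by ring⟩]
        push_cast [hNc]
        ring
      have HB := sumB M n hn1M ((α+1)/2) ((α+β+2)/4 + x/4) ((α+β+2)/4 - x/4) hA
      rw [show n+2 = n+1+1 from rfl] at HB
      have hpm : poch (-(M:ℝ)) (n+1) = poch (-(M:ℝ)) n * (-(M:ℝ) + (n:ℝ)) := poch_succ _ n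
      have hpa : poch ((α+1)/2) (n+1) = (α+1)/2 * poch ((α+1)/2+1) n := poch_succ_left _ n
      have hpa1 : poch ((α+1)/2+1) (n+1) = poch ((α+1)/2+1) n * ((α+1)/2 + 1 + (n:ℝ)) :=
        poch_succ _ n
      rw [show 2*(n+1)+1 = 2*n+1+2 from by ring, hRrec (2*n+1) (x-1),
        show 2*n+1+1 = 2*n+2 from rfl, hbe, hue,
        show 2*n+2 = 2*(n+1) from by ring, hE1, hO, hpm, hpa, hpa1]
      push_cast
      linear_combination (-((x+α-β) * 16^(n+1) * poch (-(M:ℝ)) n * (-(M:ℝ)+(n:ℝ)) *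
        poch ((α+1)/2+1) n)) * HB
  exact ⟨fun n hn x => (key n).1 hn x, fun n hn x => (key n).2 hn x⟩
end
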